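/- Let k be a field, C a small category, and X : C ⥤ Vect_k a functor with finite-dimensional values, and let Eňd(X) denote the coend of the bifunctor (A,B) ↦ Hom_k(X(A), X(B)), with canonical maps End_k(X(C)) → Eňd(X), h ↦ [h]. There is a unique coalgebra structure (Δ, ε) on Eňd(X) such that each canonical map End_k(X(C)) → Eňd(X) is a morphism of coalgebras, where End_k(V) for a finite-dimensional space V carries its standard matrix coalgebra structure Δ(e^i_j) = Σ_k e^i_k ⊗ e^k_j with counit the trace (for a basis e_1,…,e_n of V and e^i_j = e_i* ⊗ e_j). In particular Δ[e^i_j] = Σ_k [e^i_k] ⊗ [e^k_j] and ε[h] = Tr(h). -/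

import Mathlib

open CategoryTheory
open scoped Classical DirectSum TensorProduct

universe u

noncomputable section

variable (k : Type u) [Field k]

/-- The standard matrix-coalgebra comultiplication on `End_k(V)` for a finite-dimensional
space `V`: with respect to a basis `e_1, …, e_n` and `e^i_j = e_i* ⊗ e_j`, it is
`Δ(e^i_j) = Σ_l e^i_l ⊗ e^l_j`. -/
def matrixComul (V : Type u) [AddCommGroup V] [Module k V] [FiniteDimensional k V] :
    (V →ₗ[k] V) →ₗ[k] ((V →ₗ[k] V) ⊗[k] (V →ₗ[k] V)) :=
  let b := Module.finBasis k V
  ∑ i, ∑ j, ∑ l,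
    LinearMap.smulRight ((b.coord j) ∘ₗ LinearMap.applyₗ (b i))
      ((LinearMap.smulRight (b.coord i) (b l)) ⊗ₜ[k] (LinearMap.smulRight (b.coord l) (b j)))

variable (C : Type u) [SmallCategory C] (X : C ⥤ ModuleCat.{u} k)

/-- The direct sum `⊕_{C} End_k(X(C))`. -/
abbrev EndSum := ⨁ (c : C), (X.obj c →ₗ[k] X.obj c)

/-- The subspace of `⊕_{C} End_k(X(C))` spanned by all `(h ∘ X(f))_A − (X(f) ∘ h)_B`,
for `f : A ⟶ B` in `C` and `h ∈ Hom_k(X(B), X(A))`. -/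
def endRel : Submodule k (EndSum k C X) :=
  Submodule.span k
    { v | ∃ (A B : C) (f : A ⟶ B) (h : X.obj B →ₗ[k] X.obj A),
        v = DirectSum.lof k C (fun c => X.obj c →ₗ[k] X.obj c) A
              (h ∘ₗ ((X.map f).hom : X.obj A →ₗ[k] X.obj B)) -
            DirectSum.lof k C (fun c => X.obj c →ₗ[k] X.obj c) B
              (((X.map f).hom : X.obj A →ₗ[k] X.obj B) ∘ₗ h) }

/-- The coend `Eňd(X)`, realized as the quotient of `⊕_{C} End_k(X(C))` by the
dinaturality relations. -/
def EndCheck := EndSum k C X ⧸ endRel k C X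

instance : AddCommGroup (EndCheck k C X) :=
  inferInstanceAs (AddCommGroup (EndSum k C X ⧸ endRel k C X))

instance : Module k (EndCheck k C X) :=
  inferInstanceAs (Module k (EndSum k C X ⧸ endRel k C X))

/-- The canonical map `End_k(X(C)) → Eňd(X)`, `h ↦ [h]`. -/
def endMk (c : C) : (X.obj c →ₗ[k] X.obj c) →ₗ[k] EndCheck k C X :=
  (endRel k C X).mkQ ∘ₗ DirectSum.lof k C (fun c => X.obj c →ₗ[k] X.obj c) c

/-!
Writing an endomorphism of `V` as a sum of rank-one maps `φ.smulRight v` (the tensor `φ ⊗ v`),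
the matrix comultiplication becomes `φ ⊗ v ↦ ∑ₗ (φ ⊗ bₗ) ⊗ (bₗ* ⊗ v)`, i.e. the coevaluation
`∑ₗ bₗ ⊗ bₗ*` inserted between `φ` and `v`. In this form coassociativity and the counit laws
(counit = contraction = trace) are immediate, and the comultiplication is dinatural: for
`F : A → B` and `h : B → A`, after passing to classes `[-]`, both `Δ(h ∘ F)` and `Δ(F ∘ h)` become
the image of the tensor `∑ₗ F aₗ ⊗ aₗ* = ∑ₘ bₘ ⊗ (bₘ* ∘ F)` of `F`, which does not depend on the
bases. Together with `Tr(h ∘ F) = Tr(F ∘ h)`, this says that the dinaturality relations span a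
coideal of the direct-sum coalgebra `⊕_C End X(C)`, so `Eňd(X)` carries the quotient coalgebra
structure, for which every `[-]` is a coalgebra map. It is unique because the images of the
`[-]` span `Eňd(X)`.
-/

theorem LinearMap.ext_smulRight {R M N P : Type*} [CommRing R] [AddCommGroup M] [Module R M]
    [Module.Free R M] [Module.Finite R M] [AddCommGroup N] [Module R N]
    [AddCommGroup P] [Module R P] {f g : (M →ₗ[R] N) →ₗ[R] P}
    (h : ∀ (φ : Module.Dual R M) (x : N), f (φ.smulRight x) = g (φ.smulRight x)) : f = g := by
  have hdual : f ∘ₗ dualTensorHom R M N = g ∘ₗ dualTensorHom R M N :=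
    TensorProduct.ext' fun φ x => by
      have hφx : dualTensorHom R M N (φ ⊗ₜ x) = φ.smulRight x := by ext; simp
      simpa only [LinearMap.comp_apply, hφx] using h φ x
  exact (LinearMap.cancel_right dualTensorHom_bijective.2).1 hdual

namespace Module.Basis

variable {R M N : Type*} [CommSemiring R] [AddCommMonoid M] [Module R M] [AddCommMonoid N]
  [Module R N] {ι : Type*} [Fintype ι] (b : Basis ι R M)

theorem sum_smul_smulRight_coord (φ : Module.Dual R M) (x : N) :
    ∑ i, φ (b i) • (b.coord i).smulRight x = φ.smulRight x := by
  conv_rhs => rw [← b.sum_dual_apply_smul_coord φ]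
  simp only [← LinearMap.smulRightₗ_apply, map_sum, map_smul, LinearMap.sum_apply,
    LinearMap.smul_apply]

theorem sum_coord_smul_smulRight (φ : Module.Dual R N) (x : M) :
    ∑ i, b.coord i x • φ.smulRight (b i) = φ.smulRight x := by
  conv_rhs => rw [← b.sum_repr x]
  simp only [← LinearMap.smulRightₗ_apply, map_sum, map_smul, b.coord_apply]

/-- Basis independence of the tensor in `M ⊗ N*` corresponding to `F : N → M`. -/
theorem sum_apply_map_coord_eq {P : Type*} [AddCommMonoid P] [Module R P] {κ : Type*}
    [Fintype κ] (a : Basis κ R N) (G : M →ₗ[R] Module.Dual R N →ₗ[R] P) (F : N →ₗ[R] M) :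
    ∑ l, G (F (a l)) (a.coord l) = ∑ m, G (b m) (b.coord m ∘ₗ F) := by
  calc ∑ l, G (F (a l)) (a.coord l)
      = ∑ l, ∑ m, b.coord m (F (a l)) • G (b m) (a.coord l) := by
        refine Finset.sum_congr rfl fun l _ => ?_
        conv_lhs => rw [← b.sum_repr (F (a l))]
        simp only [map_sum, map_smul, LinearMap.sum_apply, LinearMap.smul_apply, b.coord_apply]
    _ = ∑ m, G (b m) (b.coord m ∘ₗ F) := by
        rw [Finset.sum_comm]
        refine Finset.sum_congr rfl fun m _ => ?_
        conv_rhs => rw [← a.sum_dual_apply_smul_coord (b.coord m ∘ₗ F)]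
        simp

end Module.Basis

section CounitLaws

variable {R A : Type*} [CommSemiring R] [AddCommMonoid A] [Module R A] [Coalgebra R A]

theorem lid_comp_map_counit_comp_comul :
    (TensorProduct.lid R A).toLinearMap ∘ₗ
        TensorProduct.map Coalgebra.counit LinearMap.id ∘ₗ Coalgebra.comul = LinearMap.id :=
  LinearMap.ext fun a =>
    congr(TensorProduct.lid R A $(Coalgebra.rTensor_counit_comul a)).trans (by simp)

theorem rid_comp_map_counit_comp_comul :
    (TensorProduct.rid R A).toLinearMap ∘ₗ
        TensorProduct.map LinearMap.id Coalgebra.counit ∘ₗ Coalgebra.comul = LinearMap.id :=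
  LinearMap.ext fun a =>
    congr(TensorProduct.rid R A $(Coalgebra.lTensor_counit_comul a)).trans (by simp)

end CounitLaws

section MatrixCoalgebra

variable {k} {V : Type u} [AddCommGroup V] [Module k V] [FiniteDimensional k V]

theorem matrixComul_apply (h : V →ₗ[k] V) :
    matrixComul k V h = ∑ i, ∑ j, ∑ l, (Module.finBasis k V).coord j (h (Module.finBasis k V i)) •
      (((Module.finBasis k V).coord i).smulRight (Module.finBasis k V l) ⊗ₜ[k]
        ((Module.finBasis k V).coord l).smulRight (Module.finBasis k V j)) := by
  simp [matrixComul, LinearMap.sum_apply]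

theorem matrixComul_smulRight (φ : Module.Dual k V) (v : V) :
    matrixComul k V (φ.smulRight v) =
      ∑ l, φ.smulRight (Module.finBasis k V l) ⊗ₜ[k]
        ((Module.finBasis k V).coord l).smulRight v := by
  rw [matrixComul_apply]
  generalize Module.finBasis k V = b
  calc _ = ∑ i, ∑ j, ∑ l, (φ (b i) * b.coord j v) •
        ((b.coord i).smulRight (b l) ⊗ₜ[k] (b.coord l).smulRight (b j)) := by
        simp only [LinearMap.smulRight_apply, map_smul, smul_eq_mul]
    _ = ∑ l, ∑ i, ∑ j, (φ (b i) * b.coord j v) •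
        ((b.coord i).smulRight (b l) ⊗ₜ[k] (b.coord l).smulRight (b j)) :=
        (Finset.sum_congr rfl fun i _ => Finset.sum_comm).trans Finset.sum_comm
    _ = _ := by
        simp_rw [← TensorProduct.smul_tmul_smul, ← TensorProduct.tmul_sum,
          ← TensorProduct.sum_tmul, b.sum_smul_smulRight_coord, b.sum_coord_smul_smulRight]

theorem matrixComul_coassoc :
    (TensorProduct.assoc k (V →ₗ[k] V) (V →ₗ[k] V) (V →ₗ[k] V)).toLinearMap ∘ₗ
        (matrixComul k V).rTensor _ ∘ₗ matrixComul k V =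
      (matrixComul k V).lTensor _ ∘ₗ matrixComul k V :=
  LinearMap.ext_smulRight fun φ v => by
    simp only [LinearMap.comp_apply, LinearEquiv.coe_coe, matrixComul_smulRight, map_sum,
      LinearMap.rTensor_tmul, LinearMap.lTensor_tmul, TensorProduct.sum_tmul,
      TensorProduct.tmul_sum, TensorProduct.assoc_tmul]
    exact Finset.sum_comm

theorem rTensor_trace_comp_matrixComul :
    (LinearMap.trace k V).rTensor _ ∘ₗ matrixComul k V = TensorProduct.mk k k _ 1 :=
  LinearMap.ext_smulRight fun φ v => by
    simp only [LinearMap.comp_apply, matrixComul_smulRight, map_sum, LinearMap.rTensor_tmul,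
      LinearMap.trace_smulRight, TensorProduct.mk_apply]
    calc ∑ l, φ (Module.finBasis k V l) ⊗ₜ[k] ((Module.finBasis k V).coord l).smulRight v
        = ∑ l, (1 : k) ⊗ₜ[k]
            (φ (Module.finBasis k V l) • ((Module.finBasis k V).coord l).smulRight v) := by
          simp_rw [← TensorProduct.smul_tmul, smul_eq_mul, mul_one]
      _ = 1 ⊗ₜ[k] φ.smulRight v := by
          rw [← TensorProduct.tmul_sum, Module.Basis.sum_smul_smulRight_coord]

theorem lTensor_trace_comp_matrixComul :
    (LinearMap.trace k V).lTensor _ ∘ₗ matrixComul k V = (TensorProduct.mk k _ k).flip 1 :=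
  LinearMap.ext_smulRight fun φ v => by
    simp only [LinearMap.comp_apply, matrixComul_smulRight, map_sum, LinearMap.lTensor_tmul,
      LinearMap.trace_smulRight, LinearMap.flip_apply, TensorProduct.mk_apply]
    calc ∑ l, φ.smulRight (Module.finBasis k V l) ⊗ₜ[k] (Module.finBasis k V).coord l v
        = ∑ l, ((Module.finBasis k V).coord l v • φ.smulRight (Module.finBasis k V l)) ⊗ₜ[k]
            (1 : k) := by
          simp_rw [TensorProduct.smul_tmul, smul_eq_mul, mul_one]
      _ = φ.smulRight v ⊗ₜ[k] 1 := by
          rw [← TensorProduct.sum_tmul, Module.Basis.sum_coord_smul_smulRight]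

instance : Coalgebra k (V →ₗ[k] V) where
  comul := matrixComul k V
  counit := LinearMap.trace k V
  coassoc := matrixComul_coassoc
  rTensor_counit_comp_comul := rTensor_trace_comp_matrixComul
  lTensor_counit_comp_comul := lTensor_trace_comp_matrixComul

theorem map_matrixComul_comp_eq {A B : Type u} [AddCommGroup A] [Module k A]
    [FiniteDimensional k A] [AddCommGroup B] [Module k B] [FiniteDimensional k B]
    {P : Type*} [AddCommGroup P] [Module k P] (F : A →ₗ[k] B)
    (ιA : (A →ₗ[k] A) →ₗ[k] P) (ιB : (B →ₗ[k] B) →ₗ[k] P)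
    (hι : ∀ g : B →ₗ[k] A, ιA (g ∘ₗ F) = ιB (F ∘ₗ g)) (h : B →ₗ[k] A) :
    TensorProduct.map ιA ιA (matrixComul k A (h ∘ₗ F)) =
      TensorProduct.map ιB ιB (matrixComul k B (F ∘ₗ h)) := by
  have hrank (ψ : Module.Dual k B) (x : A) :
      ιA ((ψ ∘ₗ F).smulRight x) = ιB (ψ.smulRight (F x)) := by
    convert hι (ψ.smulRight x) using 2 <;> ext <;> simp
  suffices key : TensorProduct.map ιA ιA ∘ₗ matrixComul k A ∘ₗ LinearMap.lcomp k A F =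
      TensorProduct.map ιB ιB ∘ₗ matrixComul k B ∘ₗ LinearMap.compRight k F from
    LinearMap.congr_fun key h
  refine LinearMap.ext_smulRight fun φ w => ?_
  have hL : φ.smulRight w ∘ₗ F = (φ ∘ₗ F).smulRight w := by ext; simp
  have hR : F ∘ₗ φ.smulRight w = φ.smulRight (F w) := by ext; simp
  simp only [LinearMap.comp_apply, LinearMap.lcomp_apply', LinearMap.compRight_apply, hL, hR,
    matrixComul_smulRight, map_sum, TensorProduct.map_tmul, hrank]
  simp only [← hrank _ w]
  exact (Module.finBasis k B).sum_apply_map_coord_eq (Module.finBasis k A)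
    ((TensorProduct.mk k P P).compl₁₂ (ιB ∘ₗ LinearMap.smulRightₗ φ)
      (ιA ∘ₗ LinearMap.smulRightₗ.flip w)) F

end MatrixCoalgebra

section Coend

variable {k C X}

theorem endMk_comp_map {A B : C} (f : A ⟶ B) (h : X.obj B →ₗ[k] X.obj A) :
    endMk k C X A (h ∘ₗ (X.map f).hom) = endMk k C X B ((X.map f).hom ∘ₗ h) :=
  (Submodule.Quotient.eq _).2 (Submodule.subset_span ⟨A, B, f, h, rfl⟩)

theorem endRel_le_ker {M : Type*} [AddCommGroup M] [Module k M] (g : EndSum k C X →ₗ[k] M)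
    (hg : ∀ (A B : C) (f : A ⟶ B) (h : X.obj B →ₗ[k] X.obj A),
      g (DirectSum.lof k C (fun c => X.obj c →ₗ[k] X.obj c) A (h ∘ₗ (X.map f).hom)) =
        g (DirectSum.lof k C (fun c => X.obj c →ₗ[k] X.obj c) B ((X.map f).hom ∘ₗ h))) :
    endRel k C X ≤ LinearMap.ker g := by
  rw [endRel, Submodule.span_le]
  rintro v ⟨A, B, f, h, rfl⟩
  simp [hg]

variable [∀ c : C, FiniteDimensional k (X.obj c)]

instance : Coalgebra k (EndSum k C X) :=
  inferInstanceAs (Coalgebra k (Π₀ c, (X.obj c →ₗ[k] X.obj c)))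

theorem EndSum.comul_lof (c : C) (h : X.obj c →ₗ[k] X.obj c) :
    Coalgebra.comul (R := k) (DirectSum.lof k C (fun c => X.obj c →ₗ[k] X.obj c) c h) =
      TensorProduct.map (DirectSum.lof k C (fun c => X.obj c →ₗ[k] X.obj c) c)
        (DirectSum.lof k C (fun c => X.obj c →ₗ[k] X.obj c) c) (matrixComul k (X.obj c) h) :=
  DFinsupp.comul_single k C (fun c => X.obj c →ₗ[k] X.obj c) c h

theorem EndSum.counit_lof (c : C) (h : X.obj c →ₗ[k] X.obj c) :
    Coalgebra.counit (R := k) (DirectSum.lof k C (fun c => X.obj c →ₗ[k] X.obj c) c h) =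
      LinearMap.trace k (X.obj c) h :=
  DFinsupp.counit_single k C (fun c => X.obj c →ₗ[k] X.obj c) c h

instance : (endRel k C X).IsCoideal where
  counit_eq_zero _ hx := endRel_le_ker (Coalgebra.counit (A := EndSum k C X)) (fun A B f h => by
    simp only [EndSum.counit_lof]
    exact LinearMap.trace_comp_comm' _ _) hx
  map_mkQ_comul_eq_zero _ hx := endRel_le_ker
    (TensorProduct.map (endRel k C X).mkQ (endRel k C X).mkQ ∘ₗ Coalgebra.comul)
    (fun A B f h => by
      simp only [LinearMap.comp_apply, EndSum.comul_lof, TensorProduct.map_map]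
      exact map_matrixComul_comp_eq _ _ _ (endMk_comp_map f) h) hx

instance : Coalgebra k (EndCheck k C X) :=
  inferInstanceAs (Coalgebra k (EndSum k C X ⧸ endRel k C X))

end Coend

namespace EndCheck

variable {k C X}

theorem hom_ext {M : Type*} [AddCommGroup M] [Module k M] {F G : EndCheck k C X →ₗ[k] M}
    (h : ∀ c : C, F ∘ₗ endMk k C X c = G ∘ₗ endMk k C X c) : F = G :=
  Submodule.linearMap_qext _ (DirectSum.linearMap_ext _ h)

variable [∀ c : C, FiniteDimensional k (X.obj c)]

theorem comul_comp_endMk (c : C) :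
    Coalgebra.comul ∘ₗ endMk k C X c =
      TensorProduct.map (endMk k C X c) (endMk k C X c) ∘ₗ matrixComul k (X.obj c) :=
  LinearMap.ext fun h =>
    congr(TensorProduct.map (endRel k C X).mkQ (endRel k C X).mkQ $(EndSum.comul_lof c h)).trans
      (TensorProduct.map_map _ _ _ _ _)

theorem counit_comp_endMk (c : C) :
    Coalgebra.counit ∘ₗ endMk k C X c = LinearMap.trace k (X.obj c) :=
  LinearMap.ext (EndSum.counit_lof c)

end EndCheck

/-- Tannaka: for a functor `X : C ⥤ Vect_k` with finite-dimensional values, there is a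
unique coalgebra structure `(Δ, ε)` on the coend `Eňd(X)` such that every canonical map
`End_k(X(C)) → Eňd(X)` is a morphism of coalgebras, where `End_k(V)` carries its standard
matrix coalgebra structure (`Δ(e^i_j) = Σ_l e^i_l ⊗ e^l_j`, counit the trace). In
particular `Δ[e^i_j] = Σ_l [e^i_l] ⊗ [e^l_j]` and `ε[h] = Tr(h)`. -/
theorem endCheck_unique_coalgebra [∀ c : C, FiniteDimensional k (X.obj c)] :
    ∃! p : (EndCheck k C X →ₗ[k] (EndCheck k C X ⊗[k] EndCheck k C X)) ×
        (EndCheck k C X →ₗ[k] k),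
      -- coassociativity
      ((TensorProduct.assoc k (EndCheck k C X) (EndCheck k C X) (EndCheck k C X)).toLinearMap
          ∘ₗ TensorProduct.map p.1 LinearMap.id ∘ₗ p.1 =
        TensorProduct.map LinearMap.id p.1 ∘ₗ p.1) ∧
      -- left and right counit laws
      ((TensorProduct.lid k (EndCheck k C X)).toLinearMap
          ∘ₗ TensorProduct.map p.2 LinearMap.id ∘ₗ p.1 = LinearMap.id) ∧
      ((TensorProduct.rid k (EndCheck k C X)).toLinearMap
          ∘ₗ TensorProduct.map LinearMap.id p.2 ∘ₗ p.1 = LinearMap.id) ∧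
      -- each canonical map is a morphism of coalgebras
      (∀ c : C, p.1 ∘ₗ endMk k C X c =
        TensorProduct.map (endMk k C X c) (endMk k C X c) ∘ₗ matrixComul k (X.obj c)) ∧
      (∀ c : C, p.2 ∘ₗ endMk k C X c = LinearMap.trace k (X.obj c)) := by
  refine ⟨(Coalgebra.comul, Coalgebra.counit),
    ⟨Coalgebra.coassoc, lid_comp_map_counit_comp_comul,
      rid_comp_map_counit_comp_comul, EndCheck.comul_comp_endMk,
      EndCheck.counit_comp_endMk⟩, ?_⟩
  rintro ⟨Δ, ε⟩ ⟨-, -, -, hΔ, hε⟩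
  exact Prod.ext (EndCheck.hom_ext fun c => (hΔ c).trans (EndCheck.comul_comp_endMk c).symm)
    (EndCheck.hom_ext fun c => (hε c).trans (EndCheck.counit_comp_endMk c).symm)
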